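/- Let ψ₁, ψ₂ : ℂ → ℂ be smooth solutions of the system ∂ψ₁ = (|ψ₁|² + |ψ₂|²)ψ₂, ∂̄ψ₂ = −(|ψ₁|² + |ψ₂|²)ψ₁. Then the Hopf quantity Q := 2(ψ₂·∂ψ̄₁ − ψ̄₁·∂ψ₂) is holomorphic, i.e. ∂̄Q = 0 everywhere. -/

import Mathlib

open Complex ComplexConjugate

/-- Wirtinger derivative ∂ = (∂ₓ - i∂_y)/2. -/
noncomputable def wd (f : ℂ → ℂ) (z : ℂ) : ℂ :=
  (fderiv ℝ f z 1 - Complex.I * fderiv ℝ f z Complex.I) / 2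

/-- Wirtinger derivative ∂̄ = (∂ₓ + i∂_y)/2. -/
noncomputable def wdb (f : ℂ → ℂ) (z : ℂ) : ℂ :=
  (fderiv ℝ f z 1 + Complex.I * fderiv ℝ f z Complex.I) / 2

lemma wd_mul {f g : ℂ → ℂ} {z : ℂ} (hf : DifferentiableAt ℝ f z)
    (hg : DifferentiableAt ℝ g z) :
    wd (fun w => f w * g w) z = wd f z * g z + f z * wd g z := by
  unfold wd
  rw [fderiv_fun_mul hf hg]
  simp only [ContinuousLinearMap.add_apply, ContinuousLinearMap.smul_apply, smul_eq_mul]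
  ring

lemma wdb_mul {f g : ℂ → ℂ} {z : ℂ} (hf : DifferentiableAt ℝ f z)
    (hg : DifferentiableAt ℝ g z) :
    wdb (fun w => f w * g w) z = wdb f z * g z + f z * wdb g z := by
  unfold wdb
  rw [fderiv_fun_mul hf hg]
  simp only [ContinuousLinearMap.add_apply, ContinuousLinearMap.smul_apply, smul_eq_mul]
  ring

lemma fderiv_conj_comp (f : ℂ → ℂ) (z v : ℂ) (hf : DifferentiableAt ℝ f z) :
    fderiv ℝ (fun w => conj (f w)) z v = conj (fderiv ℝ f z v) := by
  have : (fun w => conj (f w)) = Complex.conjCLE ∘ f := rfl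
  rw [this, Complex.conjCLE.comp_fderiv]
  rfl

lemma wd_conj {f : ℂ → ℂ} {z : ℂ} (hf : DifferentiableAt ℝ f z) :
    wd (fun w => conj (f w)) z = conj (wdb f z) := by
  unfold wd wdb
  rw [fderiv_conj_comp f z 1 hf, fderiv_conj_comp f z Complex.I hf]
  have h2 : (starRingEnd ℂ) 2 = 2 := map_ofNat _ 2
  simp [map_add, map_mul, map_div₀, h2]
  ring

lemma wdb_conj {f : ℂ → ℂ} {z : ℂ} (hf : DifferentiableAt ℝ f z) :
    wdb (fun w => conj (f w)) z = conj (wd f z) := by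
  unfold wd wdb
  rw [fderiv_conj_comp f z 1 hf, fderiv_conj_comp f z Complex.I hf]
  have h2 : (starRingEnd ℂ) 2 = 2 := map_ofNat _ 2
  simp [map_sub, map_mul, map_div₀, h2]

lemma contDiff_fderiv_apply {f : ℂ → ℂ} (hf : ContDiff ℝ (⊤ : ℕ∞) f) (v : ℂ) :
    ContDiff ℝ (⊤ : ℕ∞) (fun w => fderiv ℝ f w v) := by
  have h' : ContDiff ℝ (⊤ : ℕ∞) (fderiv ℝ f) := hf.fderiv_right (by simp)
  exact (ContinuousLinearMap.apply ℝ ℂ v).contDiff.comp h'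

lemma contDiff_wd {f : ℂ → ℂ} (hf : ContDiff ℝ (⊤ : ℕ∞) f) : ContDiff ℝ (⊤ : ℕ∞) (wd f) := by
  unfold wd
  exact (((contDiff_fderiv_apply hf 1).sub
    (contDiff_const.mul (contDiff_fderiv_apply hf Complex.I)))).div_const 2

lemma fderiv_fderiv_apply {f : ℂ → ℂ} (hf : ContDiff ℝ (⊤ : ℕ∞) f) (z u v : ℂ) :
    fderiv ℝ (fun w => fderiv ℝ f w v) z u = fderiv ℝ (fderiv ℝ f) z u v := by
  have h' : ContDiff ℝ (⊤ : ℕ∞) (fderiv ℝ f) := hf.fderiv_right (by simp)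
  have : (fun w => fderiv ℝ f w v) = (ContinuousLinearMap.apply ℝ ℂ v) ∘ (fderiv ℝ f) := rfl
  rw [this, fderiv_comp z ((ContinuousLinearMap.apply ℝ ℂ v).differentiableAt)
    (h'.differentiable (by simp) z)]
  simp

lemma sym2 {f : ℂ → ℂ} (hf : ContDiff ℝ (⊤ : ℕ∞) f) (z u v : ℂ) :
    fderiv ℝ (fderiv ℝ f) z u v = fderiv ℝ (fderiv ℝ f) z v u :=
  (hf.contDiffAt.isSymmSndFDerivAt (by rw [minSmoothness_of_isRCLikeNormedField]; exact WithTop.coe_le_coe.mpr (le_top : (2 : ℕ∞) ≤ ⊤))) u v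

lemma fderiv_lincomb {u v : ℂ → ℂ} {z a : ℂ} (c d : ℂ)
    (hu : DifferentiableAt ℝ u z) (hv : DifferentiableAt ℝ v z) :
    fderiv ℝ (fun w => c * u w + d * v w) z a
      = c * fderiv ℝ u z a + d * fderiv ℝ v z a := by
  rw [fderiv_fun_add (hu.const_mul c) (hv.const_mul d), fderiv_const_mul hu, fderiv_const_mul hv]
  simp

lemma wdb_wd_comm {f : ℂ → ℂ} (hf : ContDiff ℝ (⊤ : ℕ∞) f) (z : ℂ) :
    wdb (wd f) z = wd (wdb f) z := by
  have d1 : ∀ v, DifferentiableAt ℝ (fun w => fderiv ℝ f w v) z :=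
    fun v => (contDiff_fderiv_apply hf v).differentiable (by simp) z
  have e : ∀ u v : ℂ, fderiv ℝ (fun w => fderiv ℝ f w v) z u
      = fderiv ℝ (fderiv ℝ f) z u v := fun u v => fderiv_fderiv_apply hf z u v
  unfold wdb wd
  have hfun1 : (fun w => (fderiv ℝ f w 1 - Complex.I * fderiv ℝ f w Complex.I) / 2)
      = fun w => (2⁻¹ : ℂ) * fderiv ℝ f w 1 + (-(Complex.I/2)) * fderiv ℝ f w Complex.I := by
    funext w; ring
  have hfun2 : (fun w => (fderiv ℝ f w 1 + Complex.I * fderiv ℝ f w Complex.I) / 2)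
      = fun w => (2⁻¹ : ℂ) * fderiv ℝ f w 1 + (Complex.I/2) * fderiv ℝ f w Complex.I := by
    funext w; ring
  rw [hfun1, hfun2, fderiv_lincomb _ _ (d1 1) (d1 Complex.I),
    fderiv_lincomb _ _ (d1 1) (d1 Complex.I),
    fderiv_lincomb _ _ (d1 1) (d1 Complex.I),
    fderiv_lincomb _ _ (d1 1) (d1 Complex.I),
    e 1 1, e 1 Complex.I, e Complex.I 1, e Complex.I Complex.I,
    sym2 hf z Complex.I 1]
  have hI : (Complex.I : ℂ) * Complex.I = -1 := Complex.I_mul_I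
  field_simp
  ring

lemma wd_add {f g : ℂ → ℂ} {z : ℂ} (hf : DifferentiableAt ℝ f z)
    (hg : DifferentiableAt ℝ g z) :
    wd (fun w => f w + g w) z = wd f z + wd g z := by
  unfold wd
  rw [fderiv_fun_add hf hg]
  simp only [ContinuousLinearMap.add_apply]
  ring

lemma wdb_sub {f g : ℂ → ℂ} {z : ℂ} (hf : DifferentiableAt ℝ f z)
    (hg : DifferentiableAt ℝ g z) :
    wdb (fun w => f w - g w) z = wdb f z - wdb g z := by
  unfold wdb
  rw [fderiv_fun_sub hf hg]
  simp only [ContinuousLinearMap.sub_apply]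
  ring

lemma wdb_const_mul {g : ℂ → ℂ} {z : ℂ} (c : ℂ) (hg : DifferentiableAt ℝ g z) :
    wdb (fun w => c * g w) z = c * wdb g z := by
  unfold wdb
  rw [fderiv_const_mul hg]
  simp only [ContinuousLinearMap.smul_apply, smul_eq_mul]
  ring

lemma wd_const_mul {g : ℂ → ℂ} {z : ℂ} (c : ℂ) (hg : DifferentiableAt ℝ g z) :
    wd (fun w => c * g w) z = c * wd g z := by
  unfold wd
  rw [fderiv_const_mul hg]
  simp only [ContinuousLinearMap.smul_apply, smul_eq_mul]
  ring

theorem stmt_5 (ψ₁ ψ₂ : ℂ → ℂ)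
    (hψ₁ : ContDiff ℝ (⊤ : ℕ∞) ψ₁) (hψ₂ : ContDiff ℝ (⊤ : ℕ∞) ψ₂)
    (hD₁ : ∀ z, wd ψ₁ z =
      ((‖ψ₁ z‖ ^ 2 + ‖ψ₂ z‖ ^ 2 : ℝ) : ℂ) * ψ₂ z)
    (hD₂ : ∀ z, wdb ψ₂ z =
      -((‖ψ₁ z‖ ^ 2 + ‖ψ₂ z‖ ^ 2 : ℝ) : ℂ) * ψ₁ z)
    (Q : ℂ → ℂ)
    (hQ : ∀ z, Q z = 2 * (ψ₂ z * wd (fun w => conj (ψ₁ w)) z -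
      conj (ψ₁ z) * wd ψ₂ z)) :
    ∀ z, wdb Q z = 0 := by
  intro z
  set C₁ : ℂ → ℂ := fun w => conj (ψ₁ w) with hC₁def
  set C₂ : ℂ → ℂ := fun w => conj (ψ₂ w) with hC₂def
  set P : ℂ → ℂ := fun w => ψ₁ w * C₁ w + ψ₂ w * C₂ w with hPdef
  -- smoothness
  have hC₁ : ContDiff ℝ (⊤ : ℕ∞) C₁ := (Complex.conjCLE : ℂ →L[ℝ] ℂ).contDiff.comp hψ₁
  have hC₂ : ContDiff ℝ (⊤ : ℕ∞) C₂ := (Complex.conjCLE : ℂ →L[ℝ] ℂ).contDiff.comp hψ₂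
  have hP : ContDiff ℝ (⊤ : ℕ∞) P := (hψ₁.mul hC₁).add (hψ₂.mul hC₂)
  have d1 : ∀ w, DifferentiableAt ℝ ψ₁ w := fun w => hψ₁.differentiable (by simp) w
  have d2 : ∀ w, DifferentiableAt ℝ ψ₂ w := fun w => hψ₂.differentiable (by simp) w
  have dC₁ : ∀ w, DifferentiableAt ℝ C₁ w := fun w => hC₁.differentiable (by simp) w
  have dC₂ : ∀ w, DifferentiableAt ℝ C₂ w := fun w => hC₂.differentiable (by simp) w
  have dP : ∀ w, DifferentiableAt ℝ P w := fun w => hP.differentiable (by simp) w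
  have dwdC₁ : ∀ w, DifferentiableAt ℝ (wd C₁) w :=
    fun w => (contDiff_wd hC₁).differentiable (by simp) w
  have dwdψ₂ : ∀ w, DifferentiableAt ℝ (wd ψ₂) w :=
    fun w => (contDiff_wd hψ₂).differentiable (by simp) w
  -- translate the cast hypotheses
  have hPcast : ∀ w, ((‖ψ₁ w‖ ^ 2 + ‖ψ₂ w‖ ^ 2 : ℝ) : ℂ) = P w := by
    intro w
    simp only [hPdef, hC₁def, hC₂def, Complex.mul_conj, ← Complex.sq_norm]
    push_cast
    ring
  have hd1 : ∀ w, wd ψ₁ w = P w * ψ₂ w := by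
    intro w; rw [hD₁ w, hPcast w]
  have hd2 : ∀ w, wdb ψ₂ w = -(P w * ψ₁ w) := by
    intro w; rw [hD₂ w, hPcast w]; ring
  have hPconj : ∀ w, conj (P w) = P w := by
    intro w
    simp only [hPdef, hC₁def, hC₂def, map_add, map_mul, Complex.conj_conj]
    ring
  -- first order conjugate facts
  have hwdC₂ : ∀ w, wd C₂ w = -(P w * C₁ w) := by
    intro w
    rw [hC₂def]
    rw [wd_conj (d2 w), hd2 w]
    simp only [map_neg, map_mul, hPconj w]
    rfl
  have hwdbC₁ : wdb C₁ = fun w => P w * C₂ w := by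
    funext w
    rw [hC₁def]
    rw [wdb_conj (d1 w), hd1 w, map_mul, hPconj w]
  -- the ∂P computation
  have hwdP : wd P z = ψ₁ z * wd C₁ z + C₂ z * wd ψ₂ z := by
    rw [hPdef]
    rw [wd_add ((d1 z).fun_mul (dC₁ z)) ((d2 z).fun_mul (dC₂ z)), wd_mul (d1 z) (dC₁ z),
      wd_mul (d2 z) (dC₂ z), hd1 z, hwdC₂ z]
    ring
  -- second order facts
  have hmix1 : wdb (wd C₁) z = wd P z * C₂ z + P z * (-(P z * C₁ z)) := by
    rw [wdb_wd_comm hC₁ z, hwdbC₁,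
      wd_mul (dP z) (dC₂ z), hwdC₂ z]
  have hwdbψ₂fun : wdb ψ₂ = fun w => (-1 : ℂ) * (P w * ψ₁ w) := by
    funext w; rw [hd2 w]; ring
  have hmix2 : wdb (wd ψ₂) z = -(wd P z * ψ₁ z + P z * (P z * ψ₂ z)) := by
    rw [wdb_wd_comm hψ₂ z, hwdbψ₂fun,
      wd_const_mul (-1 : ℂ) ((dP z).fun_mul (d1 z)),
      wd_mul (dP z) (d1 z), hd1 z]
    ring
  -- expand wdb Q
  have hQfun : Q = fun w => 2 * (ψ₂ w * wd C₁ w - C₁ w * wd ψ₂ w) := funext hQ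
  rw [hQfun, wdb_const_mul 2 (((d2 z).fun_mul (dwdC₁ z)).fun_sub ((dC₁ z).fun_mul (dwdψ₂ z))),
    wdb_sub ((d2 z).fun_mul (dwdC₁ z)) ((dC₁ z).fun_mul (dwdψ₂ z)),
    wdb_mul (d2 z) (dwdC₁ z), wdb_mul (dC₁ z) (dwdψ₂ z),
    hmix1, hmix2, hd2 z, hwdbC₁, hwdP]
  simp only [hPdef, hC₁def, hC₂def]
  ring
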